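/- arXiv:1503.05204 — 4 statements merged into one kernel-verified Lean document; each statement's English description precedes it below -/
import Mathlib

section
/- Let X be a finite-dimensional real vector space, A ⊆ X a finite subset with span(A) = X, and ‖·‖_A a partial A-norm on A. Then the maximal seminorm extension ‖x‖ = inf { Σᵢ |αᵢ|·‖aᵢ‖_A : aᵢ ∈ A, Σᵢ αᵢ aᵢ = x } is in fact a norm on X, and the infimum is attained (it is a minimum) for every x ∈ X. -/
open Finset

/-- For a finite spanning subset `A` of a finite-dimensional real vector space,
the maximal seminorm extension of a partial `A`-norm is in fact a norm, and the infimum in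
its defining formula is attained for every `x`. -/
theorem stmt_4 {X : Type*} [AddCommGroup X] [Module ℝ X] [FiniteDimensional ℝ X]
    (A : Set X) (hA : A.Finite) (hspan : Submodule.span ℝ A = ⊤)
    (N : X → ℝ)
    (hN0 : ∀ a ∈ A, 0 ≤ N a)
    (hNzero : ∀ a ∈ A, (N a = 0 ↔ a = 0))
    (hNhom : ∀ (α : ℝ) (a : X), a ∈ A → α • a ∈ A → N (α • a) = |α| * N a)
    (hNtri : ∀ a b : X, a ∈ A → b ∈ A → a + b ∈ A → N (a + b) ≤ N a + N b)
    (p : X → ℝ)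
    (hp : ∀ x, p x = sInf { r | ∃ (n : ℕ) (α : Fin n → ℝ) (a : Fin n → X),
      (∀ i, a i ∈ A) ∧ (∑ i, α i • a i = x) ∧ r = ∑ i, |α i| * N (a i) }) :
    (∀ x, p x = 0 → x = 0) ∧
    (∀ x : X, ∃ (n : ℕ) (α : Fin n → ℝ) (a : Fin n → X),
      (∀ i, a i ∈ A) ∧ (∑ i, α i • a i = x) ∧ p x = ∑ i, |α i| * N (a i)) := by
  classical
  -- The finset of nonzero elements of `A`
  set A' : Finset X := hA.toFinset.filter (· ≠ 0) with hA'def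
  set m := A'.card with hm
  set e : Fin m ≃ {x // x ∈ A'} := A'.equivFin.symm with he
  set v : Fin m → X := fun j => (e j : X) with hv
  have hvA' : ∀ j, v j ∈ A' := fun j => (e j).2
  have hvA : ∀ j, v j ∈ A := by
    intro j
    have := hvA' j
    rw [hA'def, Finset.mem_filter, Set.Finite.mem_toFinset] at this
    exact this.1
  have hvne : ∀ j, v j ≠ 0 := by
    intro j
    have := hvA' j
    rw [hA'def, Finset.mem_filter] at this
    exact this.2
  have hvpos : ∀ j, 0 < N (v j) := by
    intro j
    rcases (hN0 _ (hvA j)).lt_or_eq with h | h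
    · exact h
    · exact absurd (((hNzero _ (hvA j)).1 h.symm)) (hvne j)
  -- summation over A' equals summation over Fin m via v
  have hsum : ∀ (g : X → X), ∑ j, g (v j) = ∑ b ∈ A', g b := by
    intro g
    rw [← Finset.sum_coe_sort A' g]
    exact Equiv.sum_comp e (fun b : {x // x ∈ A'} => g (b : X))
  have hsumR : ∀ (g : X → ℝ), ∑ j, g (v j) = ∑ b ∈ A', g b := by
    intro g
    rw [← Finset.sum_coe_sort A' g]
    exact Equiv.sum_comp e (fun b : {x // x ∈ A'} => g (b : X))
  -- The objective function
  set F : (Fin m → ℝ) → ℝ := fun β => ∑ j, |β j| * N (v j) with hF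
  have hFcont : Continuous F := by
    apply continuous_finset_sum
    intro j _
    exact ((continuous_apply j).abs.mul continuous_const)
  have hFnonneg : ∀ β, 0 ≤ F β :=
    fun β => Finset.sum_nonneg fun j _ => mul_nonneg (abs_nonneg _) (hN0 _ (hvA j))
  -- The linear map
  set L : (Fin m → ℝ) →ₗ[ℝ] X :=
    { toFun := fun β => ∑ j, β j • v j
      map_add' := by intro β γ; simp [add_smul, Finset.sum_add_distrib]
      map_smul' := by intro c β; simp [smul_smul, Finset.smul_sum] } with hL
  -- span of A' is everything
  have hspan' : Submodule.span ℝ (A' : Set X) = ⊤ := by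
    rw [← top_le_iff, ← hspan]
    apply Submodule.span_le.2
    intro a ha
    by_cases h0 : a = 0
    · simp [h0]
    · apply Submodule.subset_span
      simp [hA'def, Set.Finite.mem_toFinset, ha, h0]
  -- K x is nonempty
  have hKne : ∀ x : X, ∃ β, L β = x := by
    intro x
    have hx : x ∈ Submodule.span ℝ (A' : Set X) := by rw [hspan']; trivial
    obtain ⟨f, -, hf⟩ := Submodule.mem_span_finset.1 hx
    refine ⟨fun j => f (v j), ?_⟩
    show ∑ j, f (v j) • v j = x
    rw [hsum (fun b => f b • b)]
    exact hf
  -- merging: any representation gives a point of K x with smaller F value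
  have hmerge : ∀ (x : X) (n : ℕ) (α : Fin n → ℝ) (a : Fin n → X),
      (∀ i, a i ∈ A) → (∑ i, α i • a i = x) →
      ∃ β, L β = x ∧ F β ≤ ∑ i, |α i| * N (a i) := by
    intro x n α a haA hax
    set β : Fin m → ℝ := fun j => ∑ i ∈ univ.filter (fun i => a i = v j), α i with hβ
    have hvinj : Function.Injective v := by
      intro j k hjk
      exact e.injective (Subtype.ext hjk)
    refine ⟨β, ?_, ?_⟩
    · show ∑ j, β j • v j = x
      have h1 : ∀ j, β j • v j = ∑ i ∈ univ.filter (fun i => a i = v j), α i • a i := by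
        intro j
        rw [hβ, Finset.sum_smul]
        apply Finset.sum_congr rfl
        intro i hi
        rw [Finset.mem_filter] at hi
        rw [hi.2]
      calc ∑ j, β j • v j = ∑ j, ∑ i ∈ univ.filter (fun i => a i = v j), α i • a i := by
              exact Finset.sum_congr rfl fun j _ => h1 j
        _ = ∑ b ∈ A', ∑ i ∈ univ.filter (fun i => a i = b), α i • a i := by
              exact hsum (fun b => ∑ i ∈ univ.filter (fun i => a i = b), α i • a i)
        _ = ∑ i ∈ univ.filter (fun i => a i ∈ A'), α i • a i :=
              Finset.sum_fiberwise_eq_sum_filter univ A' a (fun i => α i • a i)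
        _ = ∑ i, α i • a i := by
              apply Finset.sum_filter_of_ne
              intro i _ hne
              rw [hA'def, Finset.mem_filter, Set.Finite.mem_toFinset]
              refine ⟨haA i, ?_⟩
              intro h0
              exact hne (by rw [h0, smul_zero])
        _ = x := hax
    · calc F β = ∑ j, |β j| * N (v j) := rfl
        _ ≤ ∑ j, (∑ i ∈ univ.filter (fun i => a i = v j), |α i|) * N (v j) := by
              apply Finset.sum_le_sum
              intro j _
              exact mul_le_mul_of_nonneg_right (Finset.abs_sum_le_sum_abs _ _) (hN0 _ (hvA j))
        _ = ∑ j, ∑ i ∈ univ.filter (fun i => a i = v j), |α i| * N (a i) := by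
              apply Finset.sum_congr rfl
              intro j _
              rw [Finset.sum_mul]
              apply Finset.sum_congr rfl
              intro i hi
              rw [Finset.mem_filter] at hi
              rw [hi.2]
        _ = ∑ b ∈ A', ∑ i ∈ univ.filter (fun i => a i = b), |α i| * N (a i) := by
              exact hsumR (fun b => ∑ i ∈ univ.filter (fun i => a i = b), |α i| * N (a i))
        _ = ∑ i ∈ univ.filter (fun i => a i ∈ A'), |α i| * N (a i) :=
              Finset.sum_fiberwise_eq_sum_filter univ A' a (fun i => |α i| * N (a i))
        _ ≤ ∑ i, |α i| * N (a i) := by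
              apply Finset.sum_le_sum_of_subset_of_nonneg (Finset.filter_subset _ _)
              intro i _ _
              exact mul_nonneg (abs_nonneg _) (hN0 _ (haA i))
  -- K x is closed
  have hKclosed : ∀ x : X, IsClosed {β | L β = x} := by
    intro x
    obtain ⟨β₀, hβ₀⟩ := hKne x
    have : {β | L β = x} = (fun β => β - β₀) ⁻¹' (LinearMap.ker L : Set (Fin m → ℝ)) := by
      ext β
      simp only [Set.mem_setOf_eq, Set.mem_preimage, SetLike.mem_coe, LinearMap.mem_ker,
        map_sub, hβ₀, sub_eq_zero]
    rw [this]
    exact (Submodule.closed_of_finiteDimensional _).preimage (continuous_id.sub continuous_const)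
  -- F attains its minimum on K x
  have hmin : ∀ x : X, ∃ β, L β = x ∧ ∀ γ, L γ = x → F β ≤ F γ := by
    intro x
    obtain ⟨β₀, hβ₀⟩ := hKne x
    set C : Set (Fin m → ℝ) := {β | L β = x} ∩ {β | F β ≤ F β₀} with hC
    have hCne : C.Nonempty := ⟨β₀, hβ₀, le_refl (F β₀)⟩
    have hCclosed : IsClosed C := (hKclosed x).inter (isClosed_le hFcont continuous_const)
    have hCbdd : Bornology.IsBounded C := by
      rcases isEmpty_or_nonempty (Fin m) with h | h
      · have : Subsingleton (Fin m → ℝ) := ⟨fun a b => funext fun j => (h.false j).elim⟩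
        exact (Set.toFinite C).isBounded
      · obtain ⟨j₀, hj₀⟩ := Finset.exists_min_image univ (fun j => N (v j)) ⟨Classical.arbitrary _, Finset.mem_univ _⟩
        set c := N (v j₀) with hc
        have hcpos : 0 < c := hvpos j₀
        apply isBounded_iff_forall_norm_le.2
        refine ⟨F β₀ / c, ?_⟩
        intro β hβ
        have hβF : F β ≤ F β₀ := hβ.2
        rw [pi_norm_le_iff_of_nonneg (div_nonneg (hFnonneg β₀) hcpos.le)]
        intro j
        have h1 : |β j| * c ≤ |β j| * N (v j) :=
          mul_le_mul_of_nonneg_left (hj₀.2 j (Finset.mem_univ j)) (abs_nonneg _)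
        have h2 : |β j| * N (v j) ≤ F β := by
          apply Finset.single_le_sum (fun k _ => mul_nonneg (abs_nonneg _) (hN0 _ (hvA k)))
            (Finset.mem_univ j)
        have : |β j| * c ≤ F β₀ := le_trans h1 (le_trans h2 hβF)
        rw [Real.norm_eq_abs, le_div_iff₀ hcpos]
        exact this
    have hCcompact : IsCompact C := Metric.isCompact_of_isClosed_isBounded hCclosed hCbdd
    obtain ⟨β, hβC, hβmin⟩ := hCcompact.exists_isMinOn hCne hFcont.continuousOn
    have hβ₀C : β₀ ∈ C := ⟨hβ₀, le_refl (F β₀)⟩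
    refine ⟨β, hβC.1, ?_⟩
    intro γ hγ
    by_cases hγF : F γ ≤ F β₀
    · exact hβmin ⟨hγ, hγF⟩
    · exact le_trans (hβmin hβ₀C) (le_of_not_ge hγF)
  -- the key identity: p x = F β for the minimizer β
  have hkey : ∀ x : X, ∃ β, L β = x ∧ p x = F β := by
    intro x
    obtain ⟨β, hβx, hβmin⟩ := hmin x
    refine ⟨β, hβx, ?_⟩
    rw [hp x]
    have hmem : F β ∈ { r | ∃ (n : ℕ) (α : Fin n → ℝ) (a : Fin n → X),
        (∀ i, a i ∈ A) ∧ (∑ i, α i • a i = x) ∧ r = ∑ i, |α i| * N (a i) } := by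
      exact ⟨m, β, v, hvA, hβx, rfl⟩
    have hlb : ∀ r ∈ { r | ∃ (n : ℕ) (α : Fin n → ℝ) (a : Fin n → X),
        (∀ i, a i ∈ A) ∧ (∑ i, α i • a i = x) ∧ r = ∑ i, |α i| * N (a i) }, F β ≤ r := by
      rintro r ⟨n, α, a, haA, hax, rfl⟩
      obtain ⟨γ, hγx, hγle⟩ := hmerge x n α a haA hax
      exact le_trans (hβmin γ hγx) hγle
    exact le_antisymm (csInf_le ⟨F β, hlb⟩ hmem) (le_csInf ⟨F β, hmem⟩ hlb)
  constructor
  · intro x hx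
    obtain ⟨β, hβx, hβp⟩ := hkey x
    rw [hx] at hβp
    have hβ0 : ∀ j, β j = 0 := by
      intro j
      have h1 : ∀ k ∈ univ, (0:ℝ) ≤ |β k| * N (v k) :=
        fun k _ => mul_nonneg (abs_nonneg _) (hN0 _ (hvA k))
      have h2 : |β j| * N (v j) = 0 := by
        have := (Finset.sum_eq_zero_iff_of_nonneg h1).1 hβp.symm j (Finset.mem_univ j)
        exact this
      rcases mul_eq_zero.1 h2 with h | h
      · exact abs_eq_zero.1 h
      · exact absurd h (hvpos j).ne'
    rw [← hβx]
    show ∑ j, β j • v j = 0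
    apply Finset.sum_eq_zero
    intro j _
    rw [hβ0 j, zero_smul]
  · intro x
    obtain ⟨β, hβx, hβp⟩ := hkey x
    exact ⟨m, β, v, hvA, hβx, hβp⟩
end

section
/- Let X₁ and X₂ be metric spaces with a common subspace X₀, and let X₃ be their greatest metric amalgam over X₀. Suppose f₁ : X₁ → ℝ≥0 and f₂ : X₂ → ℝ≥0 are 1-Lipschitz functions agreeing on X₀. Then the function f₃ on X₃ defined by f₃(x) = min over the two applicable cases of the greatest 1-Lipschitz extension formula, namely f₃(d) = inf { fᵢ(a) + d(d,a) : a ∈ X₁ ∪ X₂, i such that a ∈ Xᵢ }, is a 1-Lipschitz function on X₃ extending both f₁ and f₂. -/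
/-- On the greatest metric amalgam `X₃ = X₁ ⊔_{X₀} X₂` (described by the
distance `D` on `X₁ ⊕ X₂`), two nonnegative 1-Lipschitz functions `f₁`, `f₂` agreeing on `X₀`
combine, via the greatest 1-Lipschitz extension formula
`f₃(u) = inf { f(a) + D(u,a) : a ∈ X₁ ⊔ X₂ }`, to a 1-Lipschitz function on `X₃`
extending both. -/
theorem stmt_6 {X₀ X₁ X₂ : Type*} [MetricSpace X₀] [MetricSpace X₁] [MetricSpace X₂]
    [Nonempty X₀]
    (ι₁ : X₀ → X₁) (ι₂ : X₀ → X₂) (hι₁ : Isometry ι₁) (hι₂ : Isometry ι₂)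
    (D : X₁ ⊕ X₂ → X₁ ⊕ X₂ → ℝ)
    (hll : ∀ x y : X₁, D (.inl x) (.inl y) = dist x y)
    (hrr : ∀ x y : X₂, D (.inr x) (.inr y) = dist x y)
    (hlr : ∀ (x : X₁) (y : X₂), D (.inl x) (.inr y) = ⨅ z : X₀, dist x (ι₁ z) + dist (ι₂ z) y)
    (hrl : ∀ (x : X₁) (y : X₂), D (.inr y) (.inl x) = D (.inl x) (.inr y))
    (f₁ : X₁ → ℝ) (f₂ : X₂ → ℝ)
    (hf₁0 : ∀ x, 0 ≤ f₁ x) (hf₂0 : ∀ y, 0 ≤ f₂ y)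
    (hf₁L : ∀ x y, |f₁ x - f₁ y| ≤ dist x y) (hf₂L : ∀ x y, |f₂ x - f₂ y| ≤ dist x y)
    (hagree : ∀ z : X₀, f₁ (ι₁ z) = f₂ (ι₂ z))
    (f₃ : X₁ ⊕ X₂ → ℝ)
    (hf₃ : ∀ u, f₃ u = ⨅ a : X₁ ⊕ X₂, (Sum.elim f₁ f₂ a + D u a)) :
    (∀ u v, |f₃ u - f₃ v| ≤ D u v) ∧
    (∀ x : X₁, f₃ (.inl x) = f₁ x) ∧
    (∀ y : X₂, f₃ (.inr y) = f₂ y) := by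

  haveI : Nonempty X₁ := ⟨ι₁ (Classical.arbitrary X₀)⟩
  -- nonnegativity of D
  have hD0 : ∀ u a, 0 ≤ D u a := by
    rintro (x|x) (a|a)
    · rw [hll]; exact dist_nonneg
    · rw [hlr]; exact Real.iInf_nonneg fun z => by positivity
    · rw [hrl, hlr]; exact Real.iInf_nonneg fun z => by positivity
    · rw [hrr]; exact dist_nonneg
  have hbdd : ∀ u, BddBelow (Set.range fun a => Sum.elim f₁ f₂ a + D u a) := by
    intro u
    refine ⟨0, ?_⟩
    rintro r ⟨a, rfl⟩
    have : 0 ≤ Sum.elim f₁ f₂ a := by cases a <;> simp [hf₁0, hf₂0]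
    have := hD0 u a
    dsimp only
    linarith
  have hext₁ : ∀ x : X₁, f₃ (.inl x) = f₁ x := by
    intro x
    rw [hf₃]
    apply le_antisymm
    · have := ciInf_le (hbdd (.inl x)) (Sum.inl x)
      simpa [hll] using this
    · apply le_ciInf
      rintro (a|a)
      · have h := abs_le.mp (hf₁L x a)
        have := hll x a
        simp only [Sum.elim_inl]
        linarith [this ▸ h.2]
      · simp only [Sum.elim_inr]
        rw [hlr]
        have : f₁ x - f₂ a ≤ ⨅ z : X₀, dist x (ι₁ z) + dist (ι₂ z) a := by
          apply le_ciInf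
          intro z
          have h1 := abs_le.mp (hf₁L x (ι₁ z))
          have h2 := abs_le.mp (hf₂L (ι₂ z) a)
          have h3 := hagree z
          linarith [h1.2, h2.2]
        linarith
  have hext₂ : ∀ y : X₂, f₃ (.inr y) = f₂ y := by
    intro y
    rw [hf₃]
    apply le_antisymm
    · have := ciInf_le (hbdd (.inr y)) (Sum.inr y)
      simpa [hrr] using this
    · apply le_ciInf
      rintro (a|a)
      · simp only [Sum.elim_inl]
        rw [hrl, hlr]
        have : f₂ y - f₁ a ≤ ⨅ z : X₀, dist a (ι₁ z) + dist (ι₂ z) y := by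
          apply le_ciInf
          intro z
          have h1 := abs_le.mp (hf₁L (ι₁ z) a)
          have h2 := abs_le.mp (hf₂L y (ι₂ z))
          have h3 := hagree z
          linarith [h1.2, h2.2, dist_comm a (ι₁ z), dist_comm (ι₂ z) y]
        linarith
      · have h := abs_le.mp (hf₂L y a)
        have := hrr y a
        simp only [Sum.elim_inr]
        linarith [this ▸ h.2]
  refine ⟨?_, hext₁, hext₂⟩
  rintro (x|x) (y|y)
  · rw [hext₁, hext₁, hll]; exact hf₁L x y
  · rw [hext₁, hext₂, hlr]
    apply le_ciInf
    intro z
    have h1 := abs_le.mp (hf₁L x (ι₁ z))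
    have h2 := abs_le.mp (hf₂L (ι₂ z) y)
    have h3 := hagree z
    rw [abs_le]
    constructor <;> linarith [h1.1, h1.2, h2.1, h2.2]
  · rw [hext₂, hext₁, hrl, hlr]
    apply le_ciInf
    intro z
    have h1 := abs_le.mp (hf₁L y (ι₁ z))
    have h2 := abs_le.mp (hf₂L (ι₂ z) x)
    have h3 := hagree z
    rw [abs_le]
    constructor <;> linarith [h1.1, h1.2, h2.1, h2.2]
  · rw [hext₂, hext₂, hrr]; exact hf₂L x y
end

section
/- Let X be a complete metric space with a 1-Lipschitz function P : X → ℝ≥0 that has the almost-one-point extension property: for every finite subset A ⊆ X, every abstract metric one-point extension B = A ⊔ {b} with a 1-Lipschitz extension p of P↾A, and every ε > 0, there exists b' ∈ X with |d(a,b') − d(a,b)| < ε for all a ∈ A and |P(b') − p(b)| < ε. Then (X,P) has the exact one-point extension property: for every such A and B there exists b* ∈ X with d(a,b*) = d(a,b) for all a ∈ A and P(b*) = p(b). -/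
/-- The almost-one-point extension property of a subset `U` of a metric space `X` carrying a
1-Lipschitz function `P : X → ℝ≥0` (see STATEMENT 9). -/
def AOPEP {X : Type*} [MetricSpace X] (P : X → ℝ) (U : Set X) : Prop :=
  ∀ (n : ℕ) (a : Fin n → X), (∀ i, a i ∈ U) →
    ∀ (fb : Fin n → ℝ) (pb : ℝ), 0 ≤ pb →
      (∀ i, 0 < fb i) →
      (∀ i j, |fb i - fb j| ≤ dist (a i) (a j)) →
      (∀ i j, dist (a i) (a j) ≤ fb i + fb j) →
      (∀ i, |P (a i) - pb| ≤ fb i) →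
      ∀ ε > (0 : ℝ), ∃ b' ∈ U, (∀ i, |dist (a i) b' - fb i| < ε) ∧ |P b' - pb| < ε

/-- In a complete metric space `X` with a nonnegative 1-Lipschitz function `P`,
the almost-one-point extension property implies the exact one-point extension property. -/
theorem stmt_10 {X : Type*} [MetricSpace X] [CompleteSpace X] (P : X → ℝ)
    (hP0 : ∀ x, 0 ≤ P x) (hPL : ∀ x y, |P x - P y| ≤ dist x y)
    (h : AOPEP P (Set.univ : Set X)) :
    ∀ (n : ℕ) (a : Fin n → X) (fb : Fin n → ℝ) (pb : ℝ), 0 ≤ pb →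
      (∀ i, 0 < fb i) →
      (∀ i j, |fb i - fb j| ≤ dist (a i) (a j)) →
      (∀ i j, dist (a i) (a j) ≤ fb i + fb j) →
      (∀ i, |P (a i) - pb| ≤ fb i) →
      ∃ b : X, (∀ i, dist (a i) b = fb i) ∧ P b = pb := by
  intro n a fb pb hpb hfb hL hT hPfb
  -- a positive constant `c` with `c ≤ 1` and `c ≤ fb i` for all `i`
  set g : Fin (n + 1) → ℝ := Fin.cons 1 fb with hg
  have hgpos : ∀ i, 0 < g i := by
    intro i
    refine Fin.cases ?_ ?_ i
    · simp [hg]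
    · intro j; simpa [hg] using hfb j
  set c : ℝ := Finset.univ.inf' Finset.univ_nonempty g with hc
  have hcpos : 0 < c := by
    rw [hc, Finset.lt_inf'_iff]
    intro i _; exact hgpos i
  have hcle : ∀ i, c ≤ fb i := by
    intro i
    have h1 := Finset.inf'_le g (Finset.mem_univ i.succ)
    rw [hc]
    simpa only [hg, Fin.cons_succ] using h1
  set ε : ℕ → ℝ := fun k => c / 2 ^ k with hε
  have hεpos : ∀ k, 0 < ε k := by
    intro k; exact div_pos hcpos (by positivity)
  have hεle : ∀ k, ε k ≤ c := by
    intro k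
    rw [hε]
    have h1 : (1 : ℝ) ≤ 2 ^ k := one_le_pow₀ (by norm_num)
    calc c / 2 ^ k ≤ c / 1 := by
          apply div_le_div_of_nonneg_left hcpos.le one_pos h1
      _ = c := div_one c
  have hεfb : ∀ k i, ε k ≤ fb i := fun k i => (hεle k).trans (hcle i)
  -- the approximation property at each stage
  set Q : ℕ → X → Prop :=
    fun k x => (∀ i, |dist (a i) x - fb i| < ε k) ∧ |P x - pb| < ε k with hQdef
  have base : ∃ x, Q 0 x := by
    obtain ⟨b', -, h1, h2⟩ := h n a (fun _ => Set.mem_univ _) fb pb hpb hfb hL hT hPfb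
      (ε 0) (hεpos 0)
    exact ⟨b', h1, h2⟩
  have step : ∀ k x, Q k x → ∃ y, Q (k + 1) y ∧ dist x y < ε k + ε (k + 1) := by
    intro k x hx
    obtain ⟨hx1, hx2⟩ := hx
    set a' : Fin (n + 1) → X := Fin.snoc a x with ha'
    set fb' : Fin (n + 1) → ℝ := Fin.snoc fb (ε k) with hfb'
    have hfb'pos : ∀ i, 0 < fb' i := by
      intro i
      refine Fin.lastCases ?_ ?_ i
      · simpa [hfb'] using hεpos k
      · intro j; simpa [hfb'] using hfb j
    have key1 : ∀ j, |ε k - fb j| ≤ dist x (a j) := by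
      intro j
      rw [abs_le]
      constructor
      · have : fb j - ε k ≤ dist (a j) x := by
          have := (abs_lt.mp (hx1 j)).1; linarith
        rw [dist_comm]; linarith
      · have : ε k - fb j ≤ 0 := by have := hεfb k j; linarith
        linarith [dist_nonneg (x := x) (y := a j)]
    have key2 : ∀ j, dist x (a j) ≤ ε k + fb j := by
      intro j
      have := (abs_lt.mp (hx1 j)).2
      rw [dist_comm]; linarith
    have hL' : ∀ i j, |fb' i - fb' j| ≤ dist (a' i) (a' j) := by
      intro i j
      refine Fin.lastCases ?_ ?_ i
      · refine Fin.lastCases ?_ ?_ j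
        · simp [ha', hfb']
        · intro j'
          simpa [ha', hfb'] using key1 j'
      · intro i'
        refine Fin.lastCases ?_ ?_ j
        · have := key1 i'
          rw [abs_sub_comm] at this
          simpa [ha', hfb', dist_comm] using this
        · intro j'
          simpa [ha', hfb'] using hL i' j'
    have hT' : ∀ i j, dist (a' i) (a' j) ≤ fb' i + fb' j := by
      intro i j
      refine Fin.lastCases ?_ ?_ i
      · refine Fin.lastCases ?_ ?_ j
        · simp [ha', hfb']; positivity
        · intro j'
          simpa [ha', hfb'] using key2 j'
      · intro i'
        refine Fin.lastCases ?_ ?_ j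
        · have := key2 i'
          rw [dist_comm] at this
          simpa [ha', hfb'] using by linarith
        · intro j'
          simpa [ha', hfb'] using hT i' j'
    have hP' : ∀ i, |P (a' i) - pb| ≤ fb' i := by
      intro i
      refine Fin.lastCases ?_ ?_ i
      · simpa [ha', hfb'] using hx2.le
      · intro j; simpa [ha', hfb'] using hPfb j
    obtain ⟨b', -, h1, h2⟩ := h (n + 1) a' (fun _ => Set.mem_univ _) fb' pb hpb hfb'pos
      hL' hT' hP' (ε (k + 1)) (hεpos (k + 1))
    refine ⟨b', ⟨?_, h2⟩, ?_⟩
    · intro i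
      have := h1 i.castSucc
      simpa [ha', hfb'] using this
    · have := h1 (Fin.last n)
      simp only [ha', hfb', Fin.snoc_last] at this
      have := (abs_lt.mp this).2
      linarith
  -- construct the Cauchy sequence
  choose! F hF1 hF2 using step
  set b : ℕ → X := fun k => Nat.rec (Classical.choose base) (fun k x => F k x) k with hb
  have hQb : ∀ k, Q k (b k) := by
    intro k
    induction k with
    | zero => exact Classical.choose_spec base
    | succ k ih => exact hF1 k (b k) ih
  have hdist : ∀ k, dist (b k) (b (k + 1)) ≤ (2 * c) * (1 / 2) ^ k := by
    intro k
    have h2 := hF2 k (b k) (hQb k)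
    have hε1 : ε (k + 1) ≤ ε k := by
      rw [hε]
      apply div_le_div_of_nonneg_left hcpos.le (by positivity)
      exact pow_le_pow_right₀ (by norm_num) (Nat.le_succ k)
    have : dist (b k) (b (k + 1)) < ε k + ε (k + 1) := h2
    have heq : (2 * c) * (1 / 2) ^ k = 2 * ε k := by
      rw [hε]; field_simp; rw [← mul_pow]; norm_num
    rw [heq]; linarith
  have hcauchy : CauchySeq b :=
    cauchySeq_of_le_geometric (1 / 2) (2 * c) (by norm_num) hdist
  obtain ⟨blim, hblim⟩ := cauchySeq_tendsto_of_complete hcauchy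
  have hεtendsto : Filter.Tendsto ε Filter.atTop (nhds 0) := by
    have : ε = fun k => c * (1 / 2 : ℝ) ^ k := by
      funext k; rw [hε]; field_simp; rw [← mul_pow]; norm_num
    rw [this]
    simpa using (tendsto_pow_atTop_nhds_zero_of_lt_one (r := (1/2 : ℝ)) (by norm_num) (by norm_num)).const_mul c
  refine ⟨blim, ?_, ?_⟩
  · intro i
    have h1 : Filter.Tendsto (fun k => dist (a i) (b k)) Filter.atTop
        (nhds (dist (a i) blim)) := Filter.Tendsto.dist tendsto_const_nhds hblim
    have h2 : Filter.Tendsto (fun k => dist (a i) (b k)) Filter.atTop (nhds (fb i)) := by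
      rw [← tendsto_sub_nhds_zero_iff]
      exact squeeze_zero_norm (fun k => ((hQb k).1 i).le) hεtendsto
    exact tendsto_nhds_unique h1 h2
  · have h1 : Filter.Tendsto (fun k => P (b k)) Filter.atTop (nhds (P blim)) := by
      rw [← tendsto_sub_nhds_zero_iff]
      exact squeeze_zero_norm (fun k => hPL (b k) blim)
        (tendsto_iff_dist_tendsto_zero.mp hblim)
    have h2 : Filter.Tendsto (fun k => P (b k)) Filter.atTop (nhds pb) := by
      rw [← tendsto_sub_nhds_zero_iff]
      exact squeeze_zero_norm (fun k => (hQb k).2.le) hεtendsto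
    exact tendsto_nhds_unique h1 h2
end

section
/- Let X₁, X₂ be normed spaces with a common subspace X₀, and let X₃ = X₁ ⊕_{X₀} X₂ be the amalgamated direct sum with the amalgamation norm ‖x − y‖ = inf { ‖x − z‖_{X₁} + ‖z − y‖_{X₂} : z ∈ X₀ } for x ∈ X₁, y ∈ X₂ (extended to a seminorm on the pushout). Then this defines a norm on X₃ whose restrictions to X₁ and X₂ are the original norms, i.e. the canonical maps X₁ → X₃ and X₂ → X₃ are isometric embeddings. -/
open Filter Topology


/-- The amalgamated direct sum `X₃ = X₁ ⊕_{X₀} X₂` of normed spaces over a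
common (complete, hence closed) subspace `X₀`, presented by linear maps `j₁`, `j₂` forming a
pushout, carries the amalgamation norm
`N(u) = inf { ‖x‖ + ‖y‖ : u = j₁ x + j₂ y }`, which is a norm on `X₃` and restricts to the
original norms on `X₁` and `X₂`, i.e. `j₁` and `j₂` are isometric embeddings. -/
theorem stmt_16 {X₀ X₁ X₂ X₃ : Type*}
    [NormedAddCommGroup X₀] [NormedSpace ℝ X₀] [CompleteSpace X₀]
    [NormedAddCommGroup X₁] [NormedSpace ℝ X₁]
    [NormedAddCommGroup X₂] [NormedSpace ℝ X₂]
    [AddCommGroup X₃] [Module ℝ X₃]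
    (i₁ : X₀ →ₗ[ℝ] X₁) (i₂ : X₀ →ₗ[ℝ] X₂)
    (hi₁ : ∀ z, ‖i₁ z‖ = ‖z‖) (hi₂ : ∀ z, ‖i₂ z‖ = ‖z‖)
    (j₁ : X₁ →ₗ[ℝ] X₃) (j₂ : X₂ →ₗ[ℝ] X₃)
    (hcomm : ∀ z, j₁ (i₁ z) = j₂ (i₂ z))
    (hsurj : ∀ u : X₃, ∃ (x : X₁) (y : X₂), u = j₁ x + j₂ y)
    (hker : ∀ (x : X₁) (y : X₂), j₁ x + j₂ y = 0 ↔ ∃ z : X₀, x = i₁ z ∧ y = -i₂ z)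
    (N : X₃ → ℝ)
    (hN : ∀ u, N u = sInf { r | ∃ (x : X₁) (y : X₂), u = j₁ x + j₂ y ∧ r = ‖x‖ + ‖y‖ }) :
    (∀ u, 0 ≤ N u) ∧
    (∀ (c : ℝ) (u : X₃), N (c • u) = |c| * N u) ∧
    (∀ u v, N (u + v) ≤ N u + N v) ∧
    (∀ u, N u = 0 → u = 0) ∧
    (∀ x : X₁, N (j₁ x) = ‖x‖) ∧
    (∀ y : X₂, N (j₂ y) = ‖y‖) := by
  classical
  set S : X₃ → Set ℝ := fun u => { r | ∃ (x : X₁) (y : X₂), u = j₁ x + j₂ y ∧ r = ‖x‖ + ‖y‖ }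
    with hS
  have hNe : ∀ u, (S u).Nonempty := by
    intro u
    obtain ⟨x, y, hxy⟩ := hsurj u
    exact ⟨‖x‖ + ‖y‖, x, y, hxy, rfl⟩
  have hBdd : ∀ u, ∀ r ∈ S u, (0:ℝ) ≤ r := by
    rintro u r ⟨x, y, -, rfl⟩
    positivity
  have hBdd' : ∀ u, BddBelow (S u) := fun u => ⟨0, fun r hr => hBdd u r hr⟩
  have hNS : ∀ u, N u = sInf (S u) := hN
  have hNpos : ∀ u, 0 ≤ N u := by
    intro u; rw [hNS]; exact le_csInf (hNe u) (hBdd u)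
  have hNle : ∀ u, ∀ r ∈ S u, N u ≤ r := by
    intro u r hr; rw [hNS]; exact csInf_le (hBdd' u) hr
  have hN0 : N 0 = 0 :=
    le_antisymm (hNle 0 0 ⟨0, 0, by simp, by simp⟩) (hNpos 0)
  -- isometry for j₁
  have hiso1 : ∀ x : X₁, N (j₁ x) = ‖x‖ := by
    intro x
    refine le_antisymm (hNle _ _ ⟨x, 0, by simp, by simp⟩) ?_
    rw [hNS]
    refine le_csInf (hNe _) ?_
    rintro r ⟨x', y', h, rfl⟩
    have h0 : j₁ (x' - x) + j₂ y' = 0 := by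
      rw [map_sub, h]; abel
    obtain ⟨z, hz1, hz2⟩ := (hker _ _).mp h0
    have hx : x = x' - i₁ z := by rw [← hz1]; abel
    calc ‖x‖ = ‖x' - i₁ z‖ := by rw [← hx]
      _ ≤ ‖x'‖ + ‖i₁ z‖ := norm_sub_le _ _
      _ = ‖x'‖ + ‖y'‖ := by rw [hi₁, ← hi₂, hz2, norm_neg]
  have hiso2 : ∀ y : X₂, N (j₂ y) = ‖y‖ := by
    intro y
    refine le_antisymm (hNle _ _ ⟨0, y, by simp, by simp⟩) ?_
    rw [hNS]
    refine le_csInf (hNe _) ?_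
    rintro r ⟨x', y', h, rfl⟩
    have h0 : j₁ x' + j₂ (y' - y) = 0 := by
      rw [map_sub, h]; abel
    obtain ⟨z, hz1, hz2⟩ := (hker _ _).mp h0
    have hy : y = y' + i₂ z := by
      have h' : y' = -i₂ z + y := by rw [← hz2]; abel
      rw [h']; abel
    calc ‖y‖ = ‖y' + i₂ z‖ := by rw [← hy]
      _ ≤ ‖y'‖ + ‖i₂ z‖ := norm_add_le _ _
      _ = ‖y'‖ + ‖x'‖ := by rw [hi₂, ← hi₁, ← hz1]
      _ = ‖x'‖ + ‖y'‖ := add_comm _ _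
  -- triangle inequality
  have htri : ∀ u v, N (u + v) ≤ N u + N v := by
    intro u v
    refine le_of_forall_pos_le_add ?_
    intro ε hε
    have h1 : sInf (S u) < N u + ε / 2 := by rw [← hNS]; linarith
    have h2 : sInf (S v) < N v + ε / 2 := by rw [← hNS]; linarith
    obtain ⟨r, ⟨x, y, hxy, rfl⟩, hr⟩ := exists_lt_of_csInf_lt (hNe u) h1
    obtain ⟨s, ⟨x', y', hxy', rfl⟩, hs⟩ := exists_lt_of_csInf_lt (hNe v) h2
    have hmem : ‖x + x'‖ + ‖y + y'‖ ∈ S (u + v) :=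
      ⟨x + x', y + y', by rw [map_add, map_add, hxy, hxy']; abel, rfl⟩
    have := hNle _ _ hmem
    have h3 : ‖x + x'‖ ≤ ‖x‖ + ‖x'‖ := norm_add_le _ _
    have h4 : ‖y + y'‖ ≤ ‖y‖ + ‖y'‖ := norm_add_le _ _
    linarith
  -- homogeneity
  have hsmul_le : ∀ (c : ℝ) (u : X₃), N (c • u) ≤ |c| * N u := by
    intro c u
    rcases eq_or_ne c 0 with rfl | hc
    · simp [hN0, hNpos u]
    · have habs : (0:ℝ) < |c| := abs_pos.mpr hc
      have key : ∀ r ∈ S u, N (c • u) ≤ |c| * r := by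
        rintro r ⟨x, y, hxy, rfl⟩
        have hmem : ‖c • x‖ + ‖c • y‖ ∈ S (c • u) :=
          ⟨c • x, c • y, by rw [map_smul, map_smul, hxy, smul_add], rfl⟩
        have := hNle _ _ hmem
        rw [norm_smul, norm_smul] at this
        calc N (c • u) ≤ ‖c‖ * ‖x‖ + ‖c‖ * ‖y‖ := this
          _ = |c| * (‖x‖ + ‖y‖) := by rw [Real.norm_eq_abs]; ring
      have : N (c • u) / |c| ≤ sInf (S u) := by
        refine le_csInf (hNe u) fun r hr => ?_
        rw [div_le_iff₀ habs, mul_comm]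
        exact key r hr
      rw [div_le_iff₀ habs] at this
      calc N (c • u) ≤ sInf (S u) * |c| := this
        _ = |c| * N u := by rw [← hNS]; ring
  have hsmul : ∀ (c : ℝ) (u : X₃), N (c • u) = |c| * N u := by
    intro c u
    rcases eq_or_ne c 0 with rfl | hc
    · simp [hN0]
    · refine le_antisymm (hsmul_le c u) ?_
      have h1 := hsmul_le c⁻¹ (c • u)
      rw [smul_smul, inv_mul_cancel₀ hc, one_smul, abs_inv] at h1
      have habs : (0:ℝ) < |c| := abs_pos.mpr hc
      calc |c| * N u ≤ |c| * (|c|⁻¹ * N (c • u)) := by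
            exact mul_le_mul_of_nonneg_left h1 (le_of_lt habs)
        _ = N (c • u) := by field_simp
  -- definiteness
  have hdef : ∀ u, N u = 0 → u = 0 := by
    intro u hu
    obtain ⟨x0, y0, hu0⟩ := hsurj u
    have hex : ∀ n : ℕ, ∃ z : X₀, ‖x0 + i₁ z‖ + ‖y0 - i₂ z‖ < 1 / (n + 1) := by
      intro n
      have h1 : sInf (S u) < 1 / (n + 1) := by
        rw [← hNS, hu]; positivity
      obtain ⟨r, ⟨x, y, hxy, rfl⟩, hr⟩ := exists_lt_of_csInf_lt (hNe u) h1
      have h0 : j₁ (x - x0) + j₂ (y - y0) = 0 := by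
        rw [map_sub, map_sub, sub_add_sub_comm, ← hxy, ← hu0, sub_self]
      obtain ⟨z, hz1, hz2⟩ := (hker _ _).mp h0
      refine ⟨z, ?_⟩
      have hx : x0 + i₁ z = x := by rw [← hz1]; abel
      have hy : y0 - i₂ z = y := by
        have h : i₂ z = y0 - y := by
          have := hz2
          rw [← neg_eq_iff_eq_neg] at this
          rw [← this]; abel
        rw [h]; abel
      rw [hx, hy]; exact hr
    choose z hz using hex
    have hbound : Tendsto (fun n : ℕ => (1:ℝ) / (n + 1)) atTop (nhds 0) :=
      tendsto_one_div_add_atTop_nhds_zero_nat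
    have ht1 : Tendsto (fun n => ‖x0 + i₁ (z n)‖) atTop (nhds 0) := by
      refine squeeze_zero (fun n => norm_nonneg _) (fun n => ?_) hbound
      have := hz n
      have h2 : (0:ℝ) ≤ ‖y0 - i₂ (z n)‖ := norm_nonneg _
      linarith
    have ht2 : Tendsto (fun n => ‖y0 - i₂ (z n)‖) atTop (nhds 0) := by
      refine squeeze_zero (fun n => norm_nonneg _) (fun n => ?_) hbound
      have := hz n
      have h2 : (0:ℝ) ≤ ‖x0 + i₁ (z n)‖ := norm_nonneg _
      linarith
    have hiso₁ : Isometry i₁ := AddMonoidHomClass.isometry_of_norm i₁ hi₁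
    have hiso₂ : Isometry i₂ := AddMonoidHomClass.isometry_of_norm i₂ hi₂
    have htend1 : Tendsto (fun n => i₁ (z n)) atTop (nhds (-x0)) := by
      rw [tendsto_iff_norm_sub_tendsto_zero]
      convert ht1 using 2 with n
      rw [sub_neg_eq_add, add_comm]
    have htend2 : Tendsto (fun n => i₂ (z n)) atTop (nhds y0) := by
      rw [tendsto_iff_norm_sub_tendsto_zero]
      convert ht2 using 2 with n
      rw [← norm_neg, neg_sub]
    have hcauchy : CauchySeq z := by
      have h := htend1.cauchySeq
      have h' : Cauchy (Filter.map (⇑i₁) (Filter.map z atTop)) := by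
        rw [Filter.map_map]; exact h
      exact hiso₁.isUniformInducing.cauchy_map_iff.mp h'
    obtain ⟨zl, hzl⟩ := cauchySeq_tendsto_of_complete hcauchy
    have hz1 : i₁ zl = -x0 :=
      tendsto_nhds_unique ((hiso₁.continuous.tendsto zl).comp hzl) htend1
    have hz2 : i₂ zl = y0 :=
      tendsto_nhds_unique ((hiso₂.continuous.tendsto zl).comp hzl) htend2
    have : j₁ x0 + j₂ y0 = 0 := by
      refine (hker x0 y0).mpr ⟨-zl, ?_, ?_⟩
      · rw [map_neg, hz1, neg_neg]
      · rw [map_neg, hz2, neg_neg]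
    rw [hu0, this]
  exact ⟨hNpos, hsmul, htri, hdef, hiso1, hiso2⟩
end
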